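/- arXiv:1705.06402 — 2 statements merged into one kernel-verified Lean document; each statement's English description precedes it below -/
import Mathlib

section
/- For every real number x with 0 ≤ x < 1, the series ∑_{D=1}^{∞} (D^{D}/D!)·(x·e^{−x})^D converges and its sum equals x/(1−x). -/
/-!
Counting the term `D = 0` (equal to `1`, as `0 ^ 0 = 1`), the claim is that
`S(w) = ∑ D^D/D! w^D` satisfies `S(x e^{-x}) = 1/(1-x)`. Expanding `e^{-Dx}` turns
`S(x e^{-x})` into a double series in `x`; its coefficient of `x^n` is
`(1/n!) ∑_k (-1)^(n-k) (n choose k) k^n`, the `n`-th forward difference of `k ↦ k^n`, which is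
`n!/n! = 1`. So `S(x e^{-x}) = ∑ x^n = 1/(1-x)` wherever the double series converges absolutely,
i.e. for `|x| e^{|x|} < e^{-1}`, in particular near `0`. Since `S` has radius of convergence at
least `e^{-1}` and `|x e^{-x}| < e^{-1}` on `(-1/4, 1)`, both sides are analytic there and the
identity theorem extends the equality to all of `(-1/4, 1)`.
-/

open Finset Nat Real Topology

theorem alternating_sum_choose_mul_pow_eq_factorial {R : Type*} [CommRing R] (n : ℕ) :
    ∑ k ∈ range (n + 1), (-1 : R) ^ (n - k) * n.choose k * (k : R) ^ n = n ! := by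
  have h := congr_fun (fwdDiff_iter_eq_factorial (R := R) (n := n)) 0
  rw [fwdDiff_iter_eq_sum_shift] at h
  simpa [mul_assoc] using h

theorem HasSum.sum_antidiagonal {α : Type*} [AddCommMonoid α] [TopologicalSpace α]
    [ContinuousAdd α] [RegularSpace α] {f : ℕ × ℕ → α} {a : α} (hf : HasSum f a) :
    HasSum (fun n ↦ ∑ p ∈ antidiagonal n, f p) a :=
  (HasAntidiagonal.sigmaAntidiagonalEquivProd.hasSum_iff.2 hf).sigma fun n ↦
    (antidiagonal n).hasSum fun p ↦ f p

theorem hasSum_mul_pow_mul_pow_div_factorial (a y z : ℝ) (D : ℕ) :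
    HasSum (fun m ↦ a * y ^ D * ((D * z) ^ m / m !)) (a * (y * exp z) ^ D) := by
  have h := (NormedSpace.expSeries_div_hasSum_exp (D * z : ℝ)).mul_left (a * y ^ D)
  rwa [← Real.exp_eq_exp_ℝ, exp_nat_mul, mul_assoc, ← mul_pow] at h

noncomputable def selfPowDivFactorial (D : ℕ) : ℝ := (D : ℝ) ^ D / D !

theorem selfPowDivFactorial_zero : selfPowDivFactorial 0 = 1 := by
  simp [selfPowDivFactorial]

theorem selfPowDivFactorial_nonneg (D : ℕ) : 0 ≤ selfPowDivFactorial D := by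
  unfold selfPowDivFactorial
  positivity

theorem selfPowDivFactorial_le_exp_one_pow (D : ℕ) : selfPowDivFactorial D ≤ exp 1 ^ D := by
  rw [← exp_nat_mul, mul_one]
  exact pow_div_factorial_le_exp (D : ℝ) (Nat.cast_nonneg D) D

theorem sum_antidiagonal_selfPowDivFactorial_mul (n : ℕ) :
    ∑ p ∈ antidiagonal n, selfPowDivFactorial p.1 * ((-p.1 : ℝ) ^ p.2 / p.2 !) = 1 := by
  rw [Nat.sum_antidiagonal_eq_sum_range_succ_mk, ← div_self (by positivity : (n ! : ℝ) ≠ 0)]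
  nth_rw 1 [← alternating_sum_choose_mul_pow_eq_factorial]
  rw [sum_div]
  refine sum_congr rfl fun k hk ↦ ?_
  have hkn : k ≤ n := Nat.lt_succ_iff.1 (mem_range.1 hk)
  have hfac : (n ! : ℝ) = n.choose k * k ! * (n - k)! := by
    exact_mod_cast (Nat.choose_mul_factorial_mul_factorial hkn).symm
  have hpow : (k : ℝ) ^ n = k ^ k * k ^ (n - k) := by rw [← pow_add, Nat.add_sub_cancel' hkn]
  have hchoose : (n.choose k : ℝ) ≠ 0 := by exact_mod_cast (Nat.choose_pos hkn).ne'
  rw [selfPowDivFactorial, hfac, hpow, neg_pow]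
  field_simp

noncomputable def selfPowSeries : FormalMultilinearSeries ℝ ℝ ℝ :=
  FormalMultilinearSeries.ofScalars ℝ selfPowDivFactorial

theorem ofReal_exp_neg_one_le_radius_selfPowSeries :
    ENNReal.ofReal (exp (-1)) ≤ selfPowSeries.radius := by
  refine selfPowSeries.le_radius_of_bound 1 fun n ↦ ?_
  rw [selfPowSeries, FormalMultilinearSeries.ofScalars_norm,
    Real.norm_of_nonneg (selfPowDivFactorial_nonneg n), Real.coe_toNNReal _ (exp_pos _).le]
  calc selfPowDivFactorial n * exp (-1) ^ n ≤ exp 1 ^ n * exp (-1) ^ n := by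
        gcongr
        exact selfPowDivFactorial_le_exp_one_pow n
    _ = 1 := by rw [← mul_pow, ← exp_add]; simp

theorem mem_eball_radius_selfPowSeries {w : ℝ} (hw : |w| < exp (-1)) :
    w ∈ Metric.eball 0 selfPowSeries.radius := by
  refine mem_eball_zero_iff.2 (lt_of_lt_of_le ?_ ofReal_exp_neg_one_le_radius_selfPowSeries)
  rwa [← ofReal_norm, ENNReal.ofReal_lt_ofReal_iff (exp_pos _)]

theorem hasSum_selfPowSeries {w : ℝ} (hw : |w| < exp (-1)) :
    HasSum (fun D ↦ selfPowDivFactorial D * w ^ D) (selfPowSeries.sum w) := by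
  simpa [selfPowSeries, FormalMultilinearSeries.ofScalars_apply_eq, mul_comm] using
    selfPowSeries.hasSum (mem_eball_radius_selfPowSeries hw)

theorem analyticAt_selfPowSeries_sum {w : ℝ} (hw : |w| < exp (-1)) :
    AnalyticAt ℝ selfPowSeries.sum w := by
  have hpos : 0 < selfPowSeries.radius :=
    (ENNReal.ofReal_pos.2 (exp_pos _)).trans_le ofReal_exp_neg_one_le_radius_selfPowSeries
  exact (selfPowSeries.hasFPowerSeriesOnBall hpos).analyticOnNhd w
    (mem_eball_radius_selfPowSeries hw)

/-- `S(x e^{-x})` with `e^{-Dx}` expanded. -/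
noncomputable def selfPowDoubleSeries (x : ℝ) (p : ℕ × ℕ) : ℝ :=
  selfPowDivFactorial p.1 * x ^ p.1 * ((p.1 * -x) ^ p.2 / p.2 !)

theorem abs_selfPowDoubleSeries (x : ℝ) (p : ℕ × ℕ) :
    |selfPowDoubleSeries x p| =
      selfPowDivFactorial p.1 * |x| ^ p.1 * ((p.1 * |x|) ^ p.2 / p.2 !) := by
  simp [selfPowDoubleSeries, abs_mul, abs_div, abs_pow,
    abs_of_nonneg (selfPowDivFactorial_nonneg _)]

theorem summable_selfPowDoubleSeries {x : ℝ} (hx : |x| * exp |x| < exp (-1)) :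
    Summable (selfPowDoubleSeries x) := by
  refine Summable.of_abs ((summable_prod_of_nonneg fun p ↦ abs_nonneg _).2 ⟨fun D ↦ ?_, ?_⟩)
  · simp_rw [abs_selfPowDoubleSeries]
    exact (hasSum_mul_pow_mul_pow_div_factorial _ |x| |x| D).summable
  · simp_rw [abs_selfPowDoubleSeries,
      fun D ↦ (hasSum_mul_pow_mul_pow_div_factorial _ |x| |x| D).tsum_eq]
    refine (hasSum_selfPowSeries ?_).summable
    rwa [abs_of_nonneg (by positivity)]

theorem sum_antidiagonal_selfPowDoubleSeries (x : ℝ) (n : ℕ) :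
    ∑ p ∈ antidiagonal n, selfPowDoubleSeries x p = x ^ n := by
  rw [← mul_one (x ^ n), ← sum_antidiagonal_selfPowDivFactorial_mul n, mul_sum]
  refine sum_congr rfl fun p hp ↦ ?_
  rw [selfPowDoubleSeries, ← mem_antidiagonal.1 hp]
  ring

theorem hasSum_selfPowDivFactorial_of_abs_mul_exp_abs_lt {x : ℝ}
    (hx : |x| * exp |x| < exp (-1)) :
    HasSum (fun D ↦ selfPowDivFactorial D * (x * exp (-x)) ^ D) (1 - x)⁻¹ := by
  obtain ⟨s, hs⟩ := summable_selfPowDoubleSeries hx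
  have hx1 : |x| < 1 := calc
    |x| ≤ |x| * exp |x| := le_mul_of_one_le_right (abs_nonneg x) (one_le_exp (abs_nonneg x))
    _ < exp (-1) := hx
    _ < 1 := exp_lt_one_iff.2 (by norm_num)
  have hdiag : HasSum (fun n ↦ x ^ n) s := by
    simpa only [sum_antidiagonal_selfPowDoubleSeries] using hs.sum_antidiagonal
  rw [(hasSum_geometric_of_abs_lt_one hx1).unique hdiag]
  exact hs.prod_fiberwise fun D ↦ hasSum_mul_pow_mul_pow_div_factorial _ x (-x) D

theorem exp_five_div_four_lt_four : exp (5 / 4) < 4 := by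
  refine lt_of_pow_lt_pow_left₀ 4 (by norm_num) ?_
  calc exp (5 / 4) ^ 4 = exp 1 ^ 5 := by rw [← exp_nat_mul, ← exp_nat_mul]; norm_num
    _ < 3 ^ 5 := by gcongr; exact exp_one_lt_three
    _ < 4 ^ 4 := by norm_num

theorem abs_mul_exp_abs_lt_exp_neg_one {x : ℝ} (hx : |x| < 1 / 4) :
    |x| * exp |x| < exp (-1) := by
  have key : 1 / 4 * exp (1 / 4) < exp (-1) := by
    rw [exp_neg, ← one_div, lt_div_iff₀ (exp_pos 1), mul_assoc, ← exp_add]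
    norm_num
    linarith [exp_five_div_four_lt_four]
  calc |x| * exp |x| < 1 / 4 * exp (1 / 4) := by gcongr
    _ < exp (-1) := key

theorem abs_mul_exp_neg_lt_exp_neg_one {x : ℝ} (hx : x ∈ Set.Ioo (-1 / 4) 1) :
    |x * exp (-x)| < exp (-1) := by
  rcases le_or_gt 0 x with h0 | h0
  · have hlt : x < exp (x - 1) := by linarith [add_one_lt_exp (sub_ne_zero.2 hx.2.ne)]
    rw [abs_of_nonneg (by positivity)]
    calc x * exp (-x) < exp (x - 1) * exp (-x) := by gcongr
      _ = exp (-1) := by rw [← exp_add]; ring_nf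
  · have hsmall : |x| < 1 / 4 := by rw [abs_of_neg h0]; linarith [hx.1]
    calc |x * exp (-x)| = |x| * exp |x| := by rw [abs_mul, abs_exp, abs_of_neg h0]
      _ < exp (-1) := abs_mul_exp_abs_lt_exp_neg_one hsmall

theorem selfPowSeries_sum_mul_exp_neg {x : ℝ} (hx : x ∈ Set.Ioo (-1 / 4) 1) :
    selfPowSeries.sum (x * exp (-x)) = (1 - x)⁻¹ := by
  have hF :
      AnalyticOnNhd ℝ (fun x ↦ selfPowSeries.sum (x * exp (-x))) (Set.Ioo (-1 / 4) 1) :=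
    fun y hy ↦ (analyticAt_selfPowSeries_sum (abs_mul_exp_neg_lt_exp_neg_one hy)).comp
      (f := fun x ↦ x * exp (-x)) (by fun_prop)
  have hG : AnalyticOnNhd ℝ (fun x : ℝ ↦ (1 - x)⁻¹) (Set.Ioo (-1 / 4) 1) :=
    fun y hy ↦ (analyticAt_const.sub analyticAt_id).inv (sub_ne_zero.2 hy.2.ne')
  have hnear :
      (fun x ↦ selfPowSeries.sum (x * exp (-x))) =ᶠ[𝓝 0] fun x ↦ (1 - x)⁻¹ := by
    filter_upwards [Metric.ball_mem_nhds (0 : ℝ) (by norm_num : (0 : ℝ) < 1 / 4)] with y hy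
    have hy' : |y| < 1 / 4 := by simpa using hy
    have hyU : y ∈ Set.Ioo (-1 / 4) 1 :=
      ⟨by linarith [neg_abs_le y], by linarith [le_abs_self y]⟩
    exact (hasSum_selfPowSeries (abs_mul_exp_neg_lt_exp_neg_one hyU)).unique
      (hasSum_selfPowDivFactorial_of_abs_mul_exp_abs_lt (abs_mul_exp_abs_lt_exp_neg_one hy'))
  exact hF.eqOn_of_preconnected_of_eventuallyEq hG isPreconnected_Ioo (by norm_num) hnear hx

/-- for `0 ≤ x < 1`, `∑_{D=1}^∞ (D^D/D!)·(x·e^{−x})^D = x/(1−x)`. -/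
theorem stmt8 (x : ℝ) (hx0 : 0 ≤ x) (hx1 : x < 1) :
    HasSum
      (fun n : ℕ =>
        ((n + 1 : ℕ) ^ (n + 1) / (n + 1).factorial : ℝ) * (x * Real.exp (-x)) ^ (n + 1))
      (x / (1 - x)) := by
  have hx : x ∈ Set.Ioo (-1 / 4) 1 := ⟨by linarith, hx1⟩
  have h := (hasSum_nat_add_iff' 1).2 (hasSum_selfPowSeries (abs_mul_exp_neg_lt_exp_neg_one hx))
  have hval : (1 - x)⁻¹ - ∑ D ∈ range 1, selfPowDivFactorial D * (x * exp (-x)) ^ D =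
      x / (1 - x) := by
    rw [sum_range_one, selfPowDivFactorial_zero, one_mul, pow_zero]
    field_simp [sub_ne_zero.2 hx1.ne']
    ring
  rwa [selfPowSeries_sum_mul_exp_neg hx, hval] at h
end

section
/- Fix a nonnegative integer k and let F_k : ℝ → ℝ be defined by F_k(y) = ∑_{D=1}^{∞} (D^{D+k−1}/D!)·(y·e^{−y})^D. Then for every x with 0 < x < 1, F_k is differentiable at x and (x/(1−x))·F_k'(x) = F_{k+1}(x). -/
/-!
`F k` is `T_k ∘ g` with `g y = y e^{-y}` and `T_k z = ∑_{D ≥ 1} D^{D+k-1} z^D / D!`.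
Since `D^D / D! ≤ e^D`, the power series `T_k` converges for `|z| < e⁻¹`, and `g` maps `(0, 1)`
into that disc. Termwise differentiation gives `z T_k'(z) = T_{k+1}(z)`, and
`(y / (1 - y)) g'(y) = g(y)` because `g'(y) = e^{-y} (1 - y)`; the chain rule combines the two.
-/

/-- `F k y = ∑_{D=1}^∞ (D^{D+k−1}/D!)·(y·e^{−y})^D`, indexed by `n : ℕ` with `D = n+1`
(so the exponent `D + k − 1` is `n + k`). -/
noncomputable def F (k : ℕ) (y : ℝ) : ℝ :=
  ∑' n : ℕ, ((n + 1 : ℕ) ^ (n + k) / (n + 1).factorial : ℝ) * (y * Real.exp (-y)) ^ (n + 1)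

open Real

-- `treeSeries 0` is the Cayley tree function `∑ D^{D-1} z^D / D!`.
noncomputable def treeSeries (m : ℕ) (z : ℝ) : ℝ :=
  ∑' n : ℕ, ((n + 1 : ℕ) ^ (n + m) / (n + 1).factorial : ℝ) * z ^ (n + 1)

lemma summable_treeSeries_coeff_mul_pow (m : ℕ) {r : ℝ} (hr0 : 0 < r) (hr : r < exp (-1)) :
    Summable fun n : ℕ => ((n + 1 : ℕ) ^ (n + m) / (n + 1).factorial : ℝ) * r ^ n := by
  have hq0 : 0 < exp 1 * r := by positivity
  have hq1 : exp 1 * r < 1 := by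
    calc exp 1 * r < exp 1 * exp (-1) := mul_lt_mul_of_pos_left hr (exp_pos 1)
      _ = 1 := by rw [← exp_add]; norm_num
  have hmajorant : Summable fun n : ℕ =>
      exp 1 / (exp 1 * r) * ((n + 1 : ℕ) ^ m * (exp 1 * r) ^ (n + 1) : ℝ) :=
    ((summable_nat_add_iff (f := fun n : ℕ => (n : ℝ) ^ m * (exp 1 * r) ^ n) 1).2
      (summable_pow_mul_geometric_of_norm_lt_one m
        (by rwa [norm_of_nonneg hq0.le]))).mul_left _
  refine .of_nonneg_of_le (fun n => by positivity) (fun n => ?_) hmajorant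
  have hN : (1 : ℝ) ≤ (n + 1 : ℕ) := by exact_mod_cast n.succ_pos
  have hfactorial : ((n + 1 : ℕ) : ℝ) ^ n / (n + 1).factorial ≤ exp 1 ^ (n + 1) :=
    calc ((n + 1 : ℕ) : ℝ) ^ n / (n + 1).factorial
        ≤ ((n + 1 : ℕ) : ℝ) ^ (n + 1) / (n + 1).factorial := by
          gcongr
          exact n.le_succ
      _ ≤ exp ((n + 1 : ℕ) : ℝ) := pow_div_factorial_le_exp _ (by positivity) _
      _ = exp 1 ^ (n + 1) := by rw [← exp_nat_mul, mul_one]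
  calc ((n + 1 : ℕ) : ℝ) ^ (n + m) / (n + 1).factorial * r ^ n
      = ((n + 1 : ℕ) : ℝ) ^ m * (((n + 1 : ℕ) : ℝ) ^ n / (n + 1).factorial) * r ^ n := by ring
    _ ≤ ((n + 1 : ℕ) : ℝ) ^ m * exp 1 ^ (n + 1) * r ^ n := by gcongr
    _ = exp 1 / (exp 1 * r) * (((n + 1 : ℕ) : ℝ) ^ m * (exp 1 * r) ^ (n + 1)) := by
        field_simp; ring

lemma hasDerivAt_treeSeries (m : ℕ) {z : ℝ} (hz : |z| < exp (-1)) :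
    HasDerivAt (treeSeries m)
      (∑' n : ℕ, ((n + 1 : ℕ) ^ (n + (m + 1)) / (n + 1).factorial : ℝ) * z ^ n) z := by
  obtain ⟨r, hzr, hr⟩ := exists_between hz
  have hr0 : 0 < r := (abs_nonneg z).trans_lt hzr
  have hterm : ∀ (n : ℕ) (w : ℝ), HasDerivAt
      (fun w => ((n + 1 : ℕ) ^ (n + m) / (n + 1).factorial : ℝ) * w ^ (n + 1))
      (((n + 1 : ℕ) ^ (n + (m + 1)) / (n + 1).factorial : ℝ) * w ^ n) w := fun n w => by
    refine ((hasDerivAt_pow (n + 1) w).const_mul _).congr_deriv ?_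
    rw [Nat.add_sub_cancel, ← add_assoc, pow_succ]; ring
  refine hasDerivAt_tsum_of_isPreconnected (summable_treeSeries_coeff_mul_pow (m + 1) hr0 hr)
    isOpen_Ioo (convex_Ioo (-r) r).isPreconnected (fun n w _ => hterm n w) (fun n w hw => ?_)
    (y₀ := 0) ⟨neg_lt_zero.2 hr0, hr0⟩ (by simp) (abs_lt.1 hzr)
  rw [norm_mul, norm_of_nonneg (by positivity), norm_pow, norm_eq_abs]
  gcongr
  exact (abs_lt.2 hw).le

lemma mul_tsum_deriv_treeSeries (m : ℕ) (z : ℝ) :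
    z * ∑' n : ℕ, ((n + 1 : ℕ) ^ (n + (m + 1)) / (n + 1).factorial : ℝ) * z ^ n =
      treeSeries (m + 1) z := by
  rw [treeSeries, ← tsum_mul_left]
  congr 1 with n
  ring

lemma hasDerivAt_mul_exp_neg (y : ℝ) :
    HasDerivAt (fun y => y * exp (-y)) (exp (-y) * (1 - y)) y := by
  refine ((hasDerivAt_id y).mul (hasDerivAt_id y).neg.exp).congr_deriv ?_
  simp only [Pi.neg_apply, id_eq, one_mul, mul_neg, mul_one]
  ring

lemma abs_mul_exp_neg_lt {y : ℝ} (hy0 : 0 ≤ y) (hy1 : y ≠ 1) : |y * exp (-y)| < exp (-1) := by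
  rw [abs_of_nonneg (by positivity)]
  calc y * exp (-y) < exp (y - 1) * exp (-y) := by
        gcongr
        linarith [add_one_lt_exp (sub_ne_zero.2 hy1)]
    _ = exp (-1) := by rw [← exp_add]; ring_nf

/-- for each `k ≥ 0` and `0 < x < 1`, `F k` is differentiable at `x`
and `(x/(1−x))·(F k)'(x) = F (k+1) x`. -/
theorem stmt12 (k : ℕ) (x : ℝ) (hx0 : 0 < x) (hx1 : x < 1) :
    DifferentiableAt ℝ (F k) x ∧ x / (1 - x) * deriv (F k) x = F (k + 1) x := by
  have hF :=
    (hasDerivAt_treeSeries k (abs_mul_exp_neg_lt hx0.le hx1.ne)).comp x (hasDerivAt_mul_exp_neg x)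
  change HasDerivAt (F k) _ x at hF
  refine ⟨hF.differentiableAt, ?_⟩
  rw [hF.deriv, show F (k + 1) x = treeSeries (k + 1) (x * exp (-x)) from rfl,
    ← mul_tsum_deriv_treeSeries]
  field_simp [(sub_pos.2 hx1).ne']
end
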